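/- arXiv:1405.5988 — 5 statements merged into one kernel-verified Lean document; each statement's English description precedes it below -/
import Mathlib

section
/- Let n ≥ 1 and let P be a subset of {0,1}^n. There exists a 1CSP instance E = (n, L, l) with unit demands such that P^p(E) = P if and only if the following system of linear inequalities has a real solution: 1 ≤ l_1 ≤ l_2 ≤ … ≤ l_n ≤ L; Σ_{i=1}^n l_i a_i ≤ L for every a ∈ P; Σ_{i=1}^n l_i a_i ≥ L + 1 for every a ∈ {0,1}^n \ P; with all variables l_1, …, l_n, L nonnegative reals. -/
open Finset
open scoped ENNReal NNReal

/-- A 1CSP instance with unit demands: `n` is a positive integer, the piece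
lengths satisfy `0 < l 0 ≤ l 1 ≤ … ≤ l (n-1) ≤ L`. -/
def IsInstance (n : ℕ) (L : ℝ) (l : Fin n → ℝ) : Prop :=
  0 < n ∧ (∀ i, 0 < l i) ∧ (∀ i j : Fin n, i ≤ j → l i ≤ l j) ∧ (∀ i, l i ≤ L)

/-- a binary (0/1) pattern -/
def IsBinary {n : ℕ} (a : Fin n → ℕ) : Prop := ∀ i, a i ≤ 1

/-- The set of feasible patterns `P^f(E)`. -/
def feasiblePatterns (n : ℕ) (L : ℝ) (l : Fin n → ℝ) : Set (Fin n → ℕ) :=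
  {a | ∑ i, l i * (a i : ℝ) ≤ L}

/-- The set of proper patterns `P^p(E)` (for unit demands). -/
def properPatterns (n : ℕ) (L : ℝ) (l : Fin n → ℝ) : Set (Fin n → ℕ) :=
  {a | IsBinary a ∧ ∑ i, l i * (a i : ℝ) ≤ L}

/-- `z_D(P,E)`: minimum of `∑ x_a` over finitely supported `x : P → ℤ_{≥0}`
with `∑ x_a • a = 𝟏`; (`⊤` if infeasible). -/
noncomputable def zD (n : ℕ) (P : Set (Fin n → ℕ)) : ℝ≥0∞ :=
  sInf {c : ℝ≥0∞ | ∃ x : (Fin n → ℕ) →₀ ℕ,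
    (∀ a ∈ x.support, a ∈ P) ∧
    (∀ i, ∑ a ∈ x.support, x a * a i = 1) ∧
    c = ∑ a ∈ x.support, (x a : ℝ≥0∞)}

/-- `z_C(P,E)`: infimum of `∑ x_a` over finitely supported `x : P → ℝ_{≥0}`
with `∑ x_a • a = 𝟏`; (`⊤` if infeasible). -/
noncomputable def zC (n : ℕ) (P : Set (Fin n → ℕ)) : ℝ≥0∞ :=
  sInf {c : ℝ≥0∞ | ∃ x : (Fin n → ℕ) →₀ NNReal,
    (∀ a ∈ x.support, a ∈ P) ∧
    (∀ i, ∑ a ∈ x.support, (x a : ℝ) * (a i : ℝ) = 1) ∧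
    c = ∑ a ∈ x.support, (x a : ℝ≥0∞)}

noncomputable def zDf (n : ℕ) (L : ℝ) (l : Fin n → ℝ) : ℝ≥0∞ :=
  zD n (feasiblePatterns n L l)

noncomputable def zCf (n : ℕ) (L : ℝ) (l : Fin n → ℝ) : ℝ≥0∞ :=
  zC n (feasiblePatterns n L l)

noncomputable def zCp (n : ℕ) (L : ℝ) (l : Fin n → ℝ) : ℝ≥0∞ :=
  zC n (properPatterns n L l)

/-- the gap `Δ(E) = z_D^f(E) - z_C^f(E)` -/
noncomputable def gap (n : ℕ) (L : ℝ) (l : Fin n → ℝ) : ℝ≥0∞ :=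
  zDf n L l - zCf n L l

/-- the proper gap `Δ_p(E) = z_D^f(E) - z_C^p(E)` -/
noncomputable def properGap (n : ℕ) (L : ℝ) (l : Fin n → ℝ) : ℝ≥0∞ :=
  zDf n L l - zCp n L l

/-- the dominance relation `a ⪯ b`: all suffix sums of `a` are at most those of `b`. -/
def Dominates {n : ℕ} (a b : Fin n → ℕ) : Prop :=
  ∀ j : Fin n, ∑ i ∈ univ.filter (fun i => j ≤ i), a i ≤
    ∑ i ∈ univ.filter (fun i => j ≤ i), b i

/-- a set `P ⊆ {0,1}^n` is the set of proper patterns of some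
1CSP instance iff the linear inequality system (2) has a real solution. -/
theorem stmt_0 (n : ℕ) (hn : 1 ≤ n) (P : Set (Fin n → ℕ)) (hP : ∀ a ∈ P, IsBinary a) :
    (∃ (L : ℝ) (l : Fin n → ℝ), IsInstance n L l ∧ properPatterns n L l = P) ↔
    (∃ (L : ℝ) (l : Fin n → ℝ),
      0 ≤ L ∧ (∀ i, 0 ≤ l i) ∧
      (∀ i, 1 ≤ l i) ∧ (∀ i j : Fin n, i ≤ j → l i ≤ l j) ∧ (∀ i, l i ≤ L) ∧
      (∀ a ∈ P, ∑ i, l i * (a i : ℝ) ≤ L) ∧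
      (∀ a : Fin n → ℕ, IsBinary a → a ∉ P → L + 1 ≤ ∑ i, l i * (a i : ℝ))) := by

  constructor
  · rintro ⟨L, l, ⟨hn0, hl0, hmono, hlL⟩, hPP⟩
    set g : (Fin n → Fin 2) → ℝ := fun f => (∑ i, l i * ((f i : ℕ) : ℝ)) - L with hg
    set T : Finset ℝ := (Finset.univ.image g).filter (fun x => 0 < x) with hT
    have hδpos : ∀ x ∈ T, 0 < x := fun x hx => (Finset.mem_filter.mp hx).2
    set δ : ℝ := if h : T.Nonempty then T.min' h else 1 with hδ
    have hδ0 : 0 < δ := by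
      rw [hδ]; split
      · exact hδpos _ (T.min'_mem ‹_›)
      · norm_num
    have hδle : ∀ a : Fin n → ℕ, IsBinary a → a ∉ P →
        δ ≤ (∑ i, l i * (a i : ℝ)) - L := by
      intro a hb ha
      have hgt : L < ∑ i, l i * (a i : ℝ) := by
        by_contra h
        exact ha (hPP ▸ (⟨hb, le_of_not_gt h⟩ : a ∈ properPatterns n L l))
      set f : Fin n → Fin 2 := fun i => ⟨a i, by have := hb i; omega⟩ with hf
      have hfa : g f = (∑ i, l i * (a i : ℝ)) - L := by simp [hg, hf]
      have hmem : (∑ i, l i * (a i : ℝ)) - L ∈ T := by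
        rw [hT, Finset.mem_filter]
        exact ⟨Finset.mem_image.mpr ⟨f, Finset.mem_univ f, hfa⟩, by linarith⟩
      rw [hδ, dif_pos ⟨_, hmem⟩]
      exact T.min'_le _ hmem
    set m : ℝ := l ⟨0, hn⟩ with hm
    have hm0 : 0 < m := hl0 _
    have hmle : ∀ i : Fin n, m ≤ l i := fun i => hmono _ i (Nat.zero_le _)
    set c : ℝ := max (1/m) (1/δ) with hc
    have hc0 : 0 < c := lt_of_lt_of_le (by positivity) (le_max_left _ _)
    have hcm : 1 ≤ c * m := by
      have := le_max_left (1/m) (1/δ)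
      rw [div_le_iff₀ hm0] at this
      linarith
    have hcδ : 1 ≤ c * δ := by
      have := le_max_right (1/m) (1/δ)
      rw [div_le_iff₀ hδ0] at this
      linarith
    refine ⟨c * L, fun i => c * l i, ?_, ?_, ?_, ?_, ?_, ?_, ?_⟩
    · have : m ≤ L := hlL ⟨0, hn⟩
      nlinarith
    · intro i; exact (mul_pos hc0 (hl0 i)).le
    · intro i
      show 1 ≤ c * l i
      have := mul_le_mul_of_nonneg_left (hmle i) hc0.le
      linarith
    · intro i j hij
      exact mul_le_mul_of_nonneg_left (hmono i j hij) hc0.le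
    · intro i
      exact mul_le_mul_of_nonneg_left (hlL i) hc0.le
    · intro a haP
      have hap : a ∈ properPatterns n L l := hPP ▸ haP
      have hle : ∑ i, l i * (a i : ℝ) ≤ L := hap.2
      calc ∑ i, c * l i * (a i : ℝ) = c * ∑ i, l i * (a i : ℝ) := by
            rw [Finset.mul_sum]; simp [mul_assoc]
        _ ≤ c * L := mul_le_mul_of_nonneg_left hle hc0.le
    · intro a hb ha
      have h1 := hδle a hb ha
      have h2 := mul_le_mul_of_nonneg_left h1 hc0.le
      have h3 : ∑ i, c * l i * (a i : ℝ) = c * ∑ i, l i * (a i : ℝ) := by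
        rw [Finset.mul_sum]; simp [mul_assoc]
      rw [h3]; nlinarith
  · rintro ⟨L, l, hL0, hl0, hl1, hmono, hlL, hin, hout⟩
    refine ⟨L, l, ⟨hn, fun i => lt_of_lt_of_le one_pos (hl1 i), hmono, hlL⟩, ?_⟩
    ext a
    constructor
    · rintro ⟨hb, hle⟩
      by_contra ha
      have := hout a hb ha
      linarith
    · intro haP
      exact ⟨hP a haP, hin a haP⟩
end

section
/- Let E = (n, L, l) be a 1CSP instance with unit demands and n ≥ 2. If z_D^f(E) = 2, then z_C^p(E) ≥ n/(n−1) and Δ_p(E) ≤ (n−2)/(n−1). -/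
open Finset
open scoped ENNReal NNReal

/-- if `z_D^f(E) = 2` then `z_C^p(E) ≥ n/(n-1)` and
`Δ_p(E) ≤ (n-2)/(n-1)`. -/
theorem stmt_9 (n : ℕ) (hn : 2 ≤ n) (L : ℝ) (l : Fin n → ℝ) (hE : IsInstance n L l)
    (h : zDf n L l = 2) :
    (n : ℝ≥0∞) / ((n : ℝ≥0∞) - 1) ≤ zCp n L l ∧
    properGap n L l ≤ ((n : ℝ≥0∞) - 2) / ((n : ℝ≥0∞) - 1) := by
  obtain ⟨hn0, hl, hmono, hlL⟩ := hE
  -- Step 1: L < ∑ l i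
  have hLlt : L < ∑ i, l i := by
    by_contra hc
    push_neg at hc
    have hmem : (1 : ℝ≥0∞) ∈ {c : ℝ≥0∞ | ∃ x : (Fin n → ℕ) →₀ ℕ,
        (∀ a ∈ x.support, a ∈ feasiblePatterns n L l) ∧
        (∀ i, ∑ a ∈ x.support, x a * a i = 1) ∧
        c = ∑ a ∈ x.support, (x a : ℝ≥0∞)} := by
      refine ⟨Finsupp.single (fun _ => 1) 1, ?_, ?_, ?_⟩ <;>
        simp [Finsupp.support_single_ne_zero _ (one_ne_zero), feasiblePatterns, hc]
    have hle : zDf n L l ≤ 1 := sInf_le hmem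
    rw [h] at hle
    norm_num at hle
  -- casts
  have hn1 : ((n - 1 : ℕ) : ℝ≥0∞) = (n : ℝ≥0∞) - 1 := by
    exact_mod_cast ENNReal.natCast_sub n 1
  have hn1ne : ((n - 1 : ℕ) : ℝ≥0∞) ≠ 0 := by
    exact_mod_cast Nat.sub_ne_zero_of_lt hn
  have hn1nt : ((n - 1 : ℕ) : ℝ≥0∞) ≠ ⊤ := ENNReal.natCast_ne_top _
  -- Step 2: lower bound on zCp
  have key : (n : ℝ≥0∞) / ((n : ℝ≥0∞) - 1) ≤ zCp n L l := by
    apply le_sInf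
    rintro c ⟨x, hsupp, hcons, rfl⟩
    -- each proper pattern has at most n-1 ones
    have hsum : ∀ a ∈ x.support, ∑ i, a i ≤ n - 1 := by
      intro a ha
      obtain ⟨hb, hfeas⟩ := hsupp a ha
      have hj : ∃ j, a j = 0 := by
        by_contra hc
        push_neg at hc
        have hone : ∀ j, a j = 1 := fun j => le_antisymm (hb j) (Nat.one_le_iff_ne_zero.2 (hc j))
        have heq : ∑ i, l i * (a i : ℝ) = ∑ i, l i := by
          apply Finset.sum_congr rfl; intro i _; rw [hone i]; norm_num
        linarith [hfeas, hLlt]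
      obtain ⟨j, hj⟩ := hj
      have h1 : ∑ i ∈ univ.erase j, a i + a j = ∑ i, a i :=
        Finset.sum_erase_add univ a (mem_univ j)
      have h2 : ∑ i ∈ univ.erase j, a i ≤ (univ.erase j).card • 1 :=
        Finset.sum_le_card_nsmul _ _ 1 (fun i _ => hb i)
      have h3 : (univ.erase j).card = n - 1 := by
        rw [Finset.card_erase_of_mem (mem_univ j), card_univ, Fintype.card_fin]
      simp only [smul_eq_mul, mul_one] at h2
      omega
    -- real inequality
    have hS : (n : ℝ) ≤ (∑ a ∈ x.support, (x a : ℝ)) * ((n - 1 : ℕ) : ℝ) := by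
      have e1 : (n : ℝ) = ∑ a ∈ x.support, (x a : ℝ) * ∑ i, (a i : ℝ) := by
        have e0 : ∑ i : Fin n, ∑ a ∈ x.support, (x a : ℝ) * (a i : ℝ) = (n : ℝ) := by
          simp [hcons]
        rw [← e0, Finset.sum_comm]
        exact Finset.sum_congr rfl fun a _ => (Finset.mul_sum _ _ _).symm
      have e2 : ∑ a ∈ x.support, (x a : ℝ) * ∑ i, (a i : ℝ)
          ≤ ∑ a ∈ x.support, (x a : ℝ) * ((n - 1 : ℕ) : ℝ) := by
        apply Finset.sum_le_sum
        intro a ha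
        apply mul_le_mul_of_nonneg_left _ (x a).coe_nonneg
        calc ∑ i, ((a i : ℕ) : ℝ) = ((∑ i, a i : ℕ) : ℝ) := by push_cast; ring
          _ ≤ ((n - 1 : ℕ) : ℝ) := by exact_mod_cast hsum a ha
      rw [← Finset.sum_mul] at e2
      linarith [e1, e2]
    -- transfer to ENNReal
    rw [← hn1, ENNReal.div_le_iff_le_mul (Or.inl hn1ne) (Or.inl hn1nt)]
    have hN : ((n : ℝ≥0) : ℝ) ≤ (((∑ a ∈ x.support, x a) * ((n - 1 : ℕ) : ℝ≥0) : ℝ≥0) : ℝ) := by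
      rw [NNReal.coe_mul, NNReal.coe_natCast, NNReal.coe_natCast, NNReal.coe_sum]
      exact hS
    rw [NNReal.coe_le_coe] at hN
    exact_mod_cast hN
  refine ⟨key, ?_⟩
  unfold properGap
  rw [h]
  calc (2 : ℝ≥0∞) - zCp n L l
      ≤ 2 - (n : ℝ≥0∞) / ((n : ℝ≥0∞) - 1) := tsub_le_tsub_left key 2
    _ ≤ ((n : ℝ≥0∞) - 2) / ((n : ℝ≥0∞) - 1) := by
        rw [tsub_le_iff_right, ENNReal.div_add_div_same]
        have h2 : ((n : ℝ≥0∞) - 2) = ((n - 2 : ℕ) : ℝ≥0∞) := by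
          exact_mod_cast (ENNReal.natCast_sub n 2).symm
        rw [h2, ← hn1, ← Nat.cast_add,
          show n - 2 + n = 2 * (n - 1) by omega, Nat.cast_mul]
        rw [mul_div_assoc, ENNReal.div_self hn1ne hn1nt, mul_one]
        norm_num
end

section
/- Let E = (n, L, l) be a 1CSP instance with unit demands. If z_D^f(E) > 2, then z_C^p(E) > 2 and consequently Δ_p(E) < z_D^f(E) − 2. -/
open Finset
open scoped ENNReal NNReal

section Aux

variable {n : ℕ} {L : ℝ} {l : Fin n → ℝ}

lemma aux_indicator_sum (l : Fin n → ℝ) (A : Finset (Fin n)) :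
    ∑ i, l i * (((fun i => if i ∈ A then 1 else 0) : Fin n → ℕ) i : ℝ) = ∑ i ∈ A, l i := by
  classical
  simp only [apply_ite (Nat.cast : ℕ → ℝ), Nat.cast_one, Nat.cast_zero, mul_ite, mul_one,
    mul_zero]
  rw [Finset.sum_ite_mem, Finset.univ_inter]

/-- From a 2-partition into feasible parts, `zDf ≤ 2`. -/
lemma zDf_le_two (hn : 0 < n) (A : Finset (Fin n))
    (h1 : ∑ i ∈ A, l i ≤ L) (h2 : ∑ i ∈ Aᶜ, l i ≤ L) : zDf n L l ≤ 2 := by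
  classical
  set a1 : Fin n → ℕ := fun i => if i ∈ A then 1 else 0 with ha1
  set a2 : Fin n → ℕ := fun i => if i ∈ Aᶜ then 1 else 0 with ha2
  have i0 : Fin n := ⟨0, hn⟩
  have hne : a1 ≠ a2 := by
    intro hEq
    have := congrFun hEq i0
    by_cases hi : i0 ∈ A <;> simp [ha1, ha2, hi] at this
  have hne' : a2 ≠ a1 := Ne.symm hne
  set x : (Fin n → ℕ) →₀ ℕ := Finsupp.single a1 1 + Finsupp.single a2 1 with hx
  have hsupp : x.support = {a1, a2} := by
    rw [hx, Finsupp.support_add_eq]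
    · rw [Finsupp.support_single_ne_zero a1 one_ne_zero,
        Finsupp.support_single_ne_zero a2 one_ne_zero]
      rfl
    · rw [Finsupp.support_single_ne_zero a1 one_ne_zero,
        Finsupp.support_single_ne_zero a2 one_ne_zero]
      simp only [Finset.disjoint_singleton_left, Finset.mem_singleton]
      exact hne

  have hx1 : x a1 = 1 := by
    rw [hx]; simp [Finsupp.single_apply, hne']
  have hx2 : x a2 = 1 := by
    rw [hx]; simp [Finsupp.single_apply, hne]
  have hf1 : a1 ∈ feasiblePatterns n L l := by
    show ∑ i, l i * ((a1 i : ℕ) : ℝ) ≤ L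
    rw [ha1, aux_indicator_sum]; exact h1
  have hf2 : a2 ∈ feasiblePatterns n L l := by
    show ∑ i, l i * ((a2 i : ℕ) : ℝ) ≤ L
    rw [ha2, aux_indicator_sum]; exact h2
  apply sInf_le
  refine ⟨x, ?_, ?_, ?_⟩
  · intro a ha
    rw [hsupp] at ha
    rcases Finset.mem_insert.1 ha with rfl | ha
    · exact hf1
    · rw [Finset.mem_singleton] at ha
      subst ha; exact hf2
  · intro i
    rw [hsupp, Finset.sum_pair hne, hx1, hx2, one_mul, one_mul]
    by_cases hi : i ∈ A <;> simp [ha1, ha2, hi]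
  · rw [hsupp, Finset.sum_pair hne, hx1, hx2]
    norm_num

/-- `zDf` is never `⊤` (singletons give a solution). -/
lemma zDf_ne_top (hE : IsInstance n L l) : zDf n L l ≠ ⊤ := by
  classical
  obtain ⟨hn, hl, -, hlL⟩ := hE
  set e : Fin n → (Fin n → ℕ) := fun j i => if i = j then 1 else 0 with he
  have heinj : Function.Injective e := by
    intro j j' hEq
    by_contra hjj
    have := congrFun hEq j
    simp [he, hjj] at this
  set x : (Fin n → ℕ) →₀ ℕ := Finsupp.onFinset (Finset.univ.image e)
    (fun a => if a ∈ Finset.univ.image e then 1 else 0)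
    (fun a ha => by by_contra hmem; simp [hmem] at ha) with hx
  have hsupp : x.support = Finset.univ.image e := by
    ext a
    simp only [Finsupp.mem_support_iff, hx, Finsupp.onFinset_apply]
    by_cases hmem : a ∈ Finset.univ.image e <;> simp [hmem]
  have hle : zDf n L l ≤ ∑ a ∈ x.support, (x a : ℝ≥0∞) := by
    apply sInf_le
    refine ⟨x, ?_, ?_, rfl⟩
    · intro a ha
      rw [hsupp] at ha
      obtain ⟨j, -, rfl⟩ := Finset.mem_image.1 ha
      show ∑ i, l i * ((e j i : ℕ) : ℝ) ≤ L
      have hterm : ∀ i, l i * ((e j i : ℕ) : ℝ) = if i = j then l i else 0 := by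
        intro i; by_cases hij : i = j <;> simp [he, hij]
      rw [Finset.sum_congr rfl (fun i _ => hterm i), Finset.sum_ite_eq' Finset.univ j l]
      simp [hlL j]
    · intro i
      have hval : ∀ a ∈ Finset.univ.image e, x a = 1 := by
        intro a ha
        rw [hx]; simp only [Finsupp.onFinset_apply]; rw [if_pos ha]
      rw [hsupp, Finset.sum_congr rfl (fun a ha => by rw [hval a ha, one_mul]),
        Finset.sum_image (fun j _ j' _ h => heinj h)]
      simp [he, Finset.sum_ite_eq Finset.univ i (fun _ => (1:ℕ))]
  refine ne_top_of_le_ne_top ?_ hle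
  exact (ENNReal.sum_lt_top.2 (fun a _ => ENNReal.natCast_lt_top (x a))).ne

lemma binary_sum (l : Fin n → ℝ) (a : Fin n → ℕ) (hb : IsBinary a) :
    ∑ i, l i * (a i : ℝ) = ∑ i ∈ Finset.univ.filter (fun i => a i = 1), l i := by
  classical
  rw [← Finset.sum_filter_add_sum_filter_not Finset.univ (fun i => a i = 1)
    (fun i => l i * (a i : ℝ))]
  have h2 : ∑ i ∈ Finset.univ.filter (fun i => ¬ a i = 1), l i * (a i : ℝ) = 0 := by
    apply Finset.sum_eq_zero
    intro i hi
    have hle := hb i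
    have hne := (Finset.mem_filter.1 hi).2
    have h0 : a i = 0 := by omega
    rw [h0]; simp
  have h1 : ∑ i ∈ Finset.univ.filter (fun i => a i = 1), l i * (a i : ℝ)
      = ∑ i ∈ Finset.univ.filter (fun i => a i = 1), l i := by
    refine Finset.sum_congr rfl fun i hi => ?_
    rw [(Finset.mem_filter.1 hi).2]; simp
  rw [h1, h2, add_zero]

end Aux

/-- if `z_D^f(E) > 2` then `z_C^p(E) > 2` and
`Δ_p(E) < z_D^f(E) - 2`. -/
theorem stmt_10 (n : ℕ) (L : ℝ) (l : Fin n → ℝ) (hE : IsInstance n L l)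
    (h : 2 < zDf n L l) :
    2 < zCp n L l ∧ properGap n L l < zDf n L l - 2 := by
  classical
  obtain ⟨hn, hl, hmono, hlL⟩ := hE
  have hTop : zDf n L l ≠ ⊤ := zDf_ne_top ⟨hn, hl, hmono, hlL⟩
  have i0 : Fin n := ⟨0, hn⟩
  set Sl : ℝ := ∑ i, l i with hSl
  have hgood : ¬ ∃ A : Finset (Fin n), (∑ i ∈ A, l i) ≤ L ∧ (∑ i ∈ Aᶜ, l i) ≤ L := by
    rintro ⟨A, h1, h2⟩
    exact absurd (zDf_le_two hn A h1 h2) (not_le.2 h)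
  push_neg at hgood
  have hkey : ∀ A : Finset (Fin n), ∑ i ∈ A, l i ≤ L → 2 * (∑ i ∈ A, l i) < Sl := by
    intro A hA
    have h1 := hgood A hA
    have h2 : ∑ i ∈ A, l i + ∑ i ∈ Aᶜ, l i = Sl := Finset.sum_add_sum_compl A l
    linarith
  have hL0 : 0 < L := lt_of_lt_of_le (hl i0) (hlL i0)
  set S := Finset.univ.filter (fun A : Finset (Fin n) => ∑ i ∈ A, l i ≤ L) with hS
  have hfne : S.Nonempty := ⟨∅, Finset.mem_filter.2 ⟨Finset.mem_univ _, by simp [hL0.le]⟩⟩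
  set M : ℝ := S.sup' hfne (fun A => ∑ i ∈ A, l i) with hM
  have hM_lt : 2 * M < Sl := by
    have hM2 : M < Sl / 2 := by
      rw [hM, Finset.sup'_lt_iff]
      intro A hA
      have hA' := (Finset.mem_filter.1 hA).2
      have := hkey A hA'
      linarith
    linarith
  have hi0S : ({i0} : Finset (Fin n)) ∈ S :=
    Finset.mem_filter.2 ⟨Finset.mem_univ _, by simpa using hlL i0⟩
  have hMpos : 0 < M := by
    have hle0 := Finset.le_sup' (fun A : Finset (Fin n) => ∑ i ∈ A, l i) hi0S
    simp only [Finset.sum_singleton] at hle0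
    exact lt_of_lt_of_le (hl i0) hle0
  set r : ℝ := Sl / M with hr
  have hr2 : (2:ℝ) < r := (lt_div_iff₀ hMpos).2 (by linarith)
  have h2r : (2:ℝ≥0∞) < ENNReal.ofReal r := by
    have : (2:ℝ≥0∞) = ENNReal.ofReal 2 := by norm_num
    rw [this]
    exact (ENNReal.ofReal_lt_ofReal_iff (by linarith)).2 hr2
  have hzCp : 2 < zCp n L l := by
    refine lt_of_lt_of_le h2r (le_sInf ?_)
    rintro c ⟨x, hxP, hxcov, rfl⟩
    have e2 : ∀ a ∈ x.support, ∑ i, l i * (a i : ℝ) ≤ M := by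
      intro a ha
      obtain ⟨hb, hfeas⟩ := hxP a ha
      rw [binary_sum l a hb] at hfeas ⊢
      exact Finset.le_sup' (fun A : Finset (Fin n) => ∑ i ∈ A, l i)
        (Finset.mem_filter.2 ⟨Finset.mem_univ _, hfeas⟩)
    have e1 : Sl = ∑ a ∈ x.support, (x a : ℝ) * ∑ i, l i * (a i : ℝ) := by
      have step1 : Sl = ∑ i, l i * ∑ a ∈ x.support, (x a : ℝ) * (a i : ℝ) := by
        rw [hSl]
        exact Finset.sum_congr rfl fun i _ => by rw [hxcov i, mul_one]
      rw [step1]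
      simp_rw [Finset.mul_sum]
      rw [Finset.sum_comm]
      exact Finset.sum_congr rfl fun a _ => Finset.sum_congr rfl fun i _ => by ring
    have hWc : Sl ≤ M * ∑ a ∈ x.support, ((x a : ℝ≥0) : ℝ) := by
      calc Sl = ∑ a ∈ x.support, (x a : ℝ) * ∑ i, l i * (a i : ℝ) := e1
        _ ≤ ∑ a ∈ x.support, (x a : ℝ) * M :=
            Finset.sum_le_sum fun a ha =>
              mul_le_mul_of_nonneg_left (e2 a ha) (x a).coe_nonneg
        _ = M * ∑ a ∈ x.support, ((x a : ℝ≥0) : ℝ) := by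
            rw [← Finset.sum_mul, mul_comm]
    have hW : r ≤ ∑ a ∈ x.support, ((x a : ℝ≥0) : ℝ) := by
      rw [hr, div_le_iff₀ hMpos]
      linarith
    calc ENNReal.ofReal r ≤ ENNReal.ofReal (∑ a ∈ x.support, ((x a : ℝ≥0) : ℝ)) :=
          ENNReal.ofReal_le_ofReal hW
      _ = ∑ a ∈ x.support, (x a : ℝ≥0∞) := by
          rw [← NNReal.coe_sum, ENNReal.ofReal_coe_nnreal, ENNReal.coe_finset_sum]
  refine ⟨hzCp, ?_⟩
  by_cases hle : zCp n L l ≤ zDf n L l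
  · have hcne : zCp n L l ≠ ⊤ := ne_top_of_le_ne_top hTop hle
    rw [properGap, ENNReal.sub_lt_iff_lt_right hcne hle]
    calc zDf n L l = (zDf n L l - 2) + 2 := (tsub_add_cancel_of_le h.le).symm
      _ < (zDf n L l - 2) + zCp n L l :=
          ENNReal.add_lt_add_left (ENNReal.sub_ne_top hTop) hzCp
  · push_neg at hle
    rw [properGap, tsub_eq_zero_of_le hle.le]
    exact tsub_pos_of_lt h
end

section
/- Let E = (n, L, l) be a 1CSP instance with unit demands. If z_D^f(E) = 3, then Δ_p(E) < 1, i.e., E is a proper IRUP instance. -/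
open Finset
open scoped ENNReal NNReal

/-!
If a proper pattern `a` had a feasible complement `1 - a`, the two patterns `a` and `1 - a`
would form an integer solution of value 2. So when `z_D^f(E) = 3`, every proper pattern has
length at most `L` and below `∑ lᵢ - L`, hence the longest one, of length `M`, satisfies
`2 M < ∑ lᵢ`. A fractional solution over proper patterns covers the total length `∑ lᵢ` with
patterns of length at most `M`, so its value is at least `∑ lᵢ / M > 2`, and
`Δ_p(E) = 3 - z_C^p(E) < 1`.
-/

def load {n : ℕ} (l : Fin n → ℝ) (a : Fin n → ℕ) : ℝ := ∑ i, l i * a i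

lemma load_one_sub {n : ℕ} (l : Fin n → ℝ) {a : Fin n → ℕ} (ha : IsBinary a) :
    load l (1 - a) = ∑ i, l i - load l a := by
  rw [load, load, ← sum_sub_distrib]
  refine sum_congr rfl fun i _ => ?_
  rw [Pi.sub_apply, Pi.one_apply, Nat.cast_sub (ha i)]
  ring

lemma load_single {n : ℕ} (l : Fin n → ℝ) (i : Fin n) : load l (Pi.single i 1) = l i := by
  simp [load, Pi.single_apply]

lemma properPatterns_finite (n : ℕ) (L : ℝ) (l : Fin n → ℝ) : (properPatterns n L l).Finite :=
  (Set.Finite.pi (t := fun _ => Set.Iic 1) fun _ => Set.finite_Iic 1).subset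
    fun _ ha i _ => ha.1 i

lemma single_mem_properPatterns {n : ℕ} {L : ℝ} {l : Fin n → ℝ} {i : Fin n} (hi : l i ≤ L) :
    Pi.single i 1 ∈ properPatterns n L l := by
  refine ⟨fun j => ?_, (load_single l i).trans_le hi⟩
  rcases eq_or_ne j i with rfl | hj
  · simp
  · simp [hj]

lemma zD_le_two {n : ℕ} (hn : 0 < n) {P : Set (Fin n → ℕ)} {a b : Fin n → ℕ} (ha : a ∈ P)
    (hb : b ∈ P) (hab : a + b = 1) : zD n P ≤ 2 := by
  classical
  have hne : a ≠ b := by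
    rintro rfl
    have := congrFun hab ⟨0, hn⟩
    simp only [Pi.add_apply, Pi.one_apply] at this
    omega
  have hsupp := Finsupp.support_single_add_single (M := ℕ) hne one_ne_zero one_ne_zero
  refine sInf_le ⟨Finsupp.single a 1 + Finsupp.single b 1, ?_, fun i => ?_, ?_⟩
  · rw [hsupp]
    rintro p hp
    rcases Finset.mem_insert.1 hp with rfl | hp
    · exact ha
    · rwa [Finset.mem_singleton.1 hp]
  · rw [hsupp, sum_pair hne]
    simpa [hne, hne.symm] using congrFun hab i
  · rw [hsupp, sum_pair hne]
    simp [hne, hne.symm, one_add_one_eq_two]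

lemma ofReal_div_le_zC {n : ℕ} {P : Set (Fin n → ℕ)} {l : Fin n → ℝ} {M : ℝ} (hM : 0 < M)
    (hP : ∀ a ∈ P, load l a ≤ M) : ENNReal.ofReal ((∑ i, l i) / M) ≤ zC n P := by
  refine le_sInf ?_
  rintro c ⟨x, hxP, hcov, rfl⟩
  have hsum : ∑ i, l i ≤ (∑ a ∈ x.support, (x a : ℝ)) * M :=
    calc ∑ i, l i = ∑ i, l i * ∑ a ∈ x.support, (x a : ℝ) * a i := by simp [hcov]
      _ = ∑ a ∈ x.support, (x a : ℝ) * load l a := by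
        simp_rw [load, mul_sum, mul_left_comm (l _)]
        exact sum_comm
      _ ≤ ∑ a ∈ x.support, (x a : ℝ) * M :=
        sum_le_sum fun a ha => mul_le_mul_of_nonneg_left (hP a (hxP a ha)) (x a).2
      _ = (∑ a ∈ x.support, (x a : ℝ)) * M := (sum_mul ..).symm
  rw [← ENNReal.ofNNReal_finsetSum, ← ENNReal.ofReal_coe_nnreal, NNReal.coe_sum]
  exact ENNReal.ofReal_le_ofReal ((div_le_iff₀ hM).2 hsum)

lemma load_lt_of_two_lt_zDf {n : ℕ} {L : ℝ} {l : Fin n → ℝ} (hn : 0 < n) (h : 2 < zDf n L l)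
    {a : Fin n → ℕ} (ha : a ∈ properPatterns n L l) : load l a < ∑ i, l i - L := by
  by_contra! hle
  have hcompl : 1 - a ∈ feasiblePatterns n L l := by
    change load l (1 - a) ≤ L
    rw [load_one_sub l ha.1]
    linarith
  refine (zD_le_two hn ha.2 hcompl ?_).not_gt h
  funext i
  simp only [Pi.add_apply, Pi.sub_apply, Pi.one_apply]
  have hai : a i ≤ 1 := ha.1 i
  omega

/-- if `z_D^f(E) = 3` then `Δ_p(E) < 1`, i.e. `E` is a
proper IRUP instance. -/
theorem stmt_11 (n : ℕ) (L : ℝ) (l : Fin n → ℝ) (hE : IsInstance n L l)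
    (h : zDf n L l = 3) :
    properGap n L l < 1 := by
  obtain ⟨hn, hl, -, hlL⟩ := hE
  let i₀ : Fin n := ⟨0, hn⟩
  have hsingle := single_mem_properPatterns (hlL i₀)
  obtain ⟨a, ha, hmax⟩ :=
    Set.exists_max_image _ (load l) (properPatterns_finite n L l) ⟨_, hsingle⟩
  have hpos : 0 < load l a := (hl i₀).trans_le (load_single l i₀ ▸ hmax _ hsingle)
  have h2 : 2 < (∑ i, l i) / load l a := by
    have hcompl := load_lt_of_two_lt_zDf hn (by rw [h]; norm_num) ha
    have hfit : load l a ≤ L := ha.2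
    rw [lt_div_iff₀ hpos]
    linarith
  have hzCp : 2 < zCp n L l := calc
    (2 : ℝ≥0∞) = ENNReal.ofReal 2 := by norm_num
    _ < ENNReal.ofReal ((∑ i, l i) / load l a) :=
      (ENNReal.ofReal_lt_ofReal_iff (two_pos.trans h2)).2 h2
    _ ≤ zCp n L l := ofReal_div_le_zC hpos hmax
  rw [properGap, h]
  rcases le_or_gt (zCp n L l) 3 with h3 | h3
  · refine ENNReal.sub_lt_of_lt_add h3 ?_
    calc (3 : ℝ≥0∞) = 1 + 2 := by norm_num
      _ < 1 + zCp n L l := ENNReal.add_lt_add_left ENNReal.one_ne_top hzCp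
  · simp [tsub_eq_zero_of_le h3.le]
end

section
/- The 1CSP instance E = (10, 81, l) with unit demands and l = (4, 6, 6, 9, 16, 29, 32, 37, 40, 62) satisfies Δ_p(E) = 1; in particular, E is a proper non-IRUP instance with demand n = 10. -/
open Finset
open scoped ENNReal NNReal

/-!
Upper bounds come from explicit covers: four feasible patterns partition the items, and nine
proper patterns (one repeated) cover every item exactly three times, so weight `1/3` on each
gives `z_C^p ≤ 3`.

For `z_D^f ≥ 4`, an exact integral cover by at most three patterns would pack the ten items
into three bins of length `81`; the total length is `241`, and an exhaustive search shows that
such a packing does not exist. For `z_C^p ≥ 3` we use the dual weights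
`(0, 0, 0, 0, 0, 1, 1, 1, 1, 2) / 2`, of total `3`: no proper pattern of length at most `81`
contains three of the items `29, 32, 37, 40, 62`, nor `62` together with one of the others, so
each proper pattern has dual weight at most `1` (weak LP duality).
-/

section SumSingle

variable {ι α M : Type*} [Fintype ι] [AddCommMonoid M]

lemma sum_support_sum_single {N : Type*} [AddCommMonoid N] (p : ι → α) (v : ι → M)
    (F : α → M → N) (h_zero : ∀ a, F a 0 = 0)
    (h_add : ∀ a b₁ b₂, F a (b₁ + b₂) = F a b₁ + F a b₂) :
    ∑ a ∈ (∑ k, Finsupp.single (p k) (v k)).support, F a ((∑ k, Finsupp.single (p k) (v k)) a) =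
      ∑ k, F (p k) (v k) := by
  classical
  rw [← Finsupp.sum, ← Finsupp.sum_finsetSum_index h_zero h_add]
  exact Finset.sum_congr rfl fun k _ => Finsupp.sum_single_index (h_zero _)

lemma mem_of_mem_support_sum_single {P : Set α} (p : ι → α) (v : ι → M) (hp : ∀ k, p k ∈ P) :
    ∀ a ∈ (∑ k, Finsupp.single (p k) (v k)).support, a ∈ P := by
  classical
  intro a ha
  obtain ⟨k, -, hk⟩ := Finset.mem_biUnion.1 (Finsupp.support_finsetSum ha)
  rw [Finset.mem_singleton.1 (Finsupp.support_single_subset hk)]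
  exact hp k

end SumSingle

section PatternBounds

variable {n : ℕ} {P : Set (Fin n → ℕ)} {ι : Type*} [Fintype ι]

lemma zD_le_card (p : ι → Fin n → ℕ) (hp : ∀ k, p k ∈ P) (hcover : ∀ i, ∑ k, p k i = 1) :
    zD n P ≤ Fintype.card ι := by
  refine sInf_le ⟨∑ k, Finsupp.single (p k) 1, mem_of_mem_support_sum_single p _ hp,
    fun i => ?_, ?_⟩
  · refine (sum_support_sum_single p _ (fun a m => m * a i) (by simp) (by intros; ring)).trans ?_
    simpa using hcover i
  · refine Eq.trans ?_ (sum_support_sum_single p (fun _ => 1) (fun _ (m : ℕ) => (m : ℝ≥0∞))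
      (by simp) (by simp)).symm
    simp

lemma zC_le_card_div (p : ι → Fin n → ℕ) (hp : ∀ k, p k ∈ P) (m : ℕ) (hm : m ≠ 0)
    (hcover : ∀ i, ∑ k, p k i = m) :
    zC n P ≤ Fintype.card ι / m := by
  refine sInf_le ⟨∑ k, Finsupp.single (p k) (m⁻¹ : ℝ≥0), mem_of_mem_support_sum_single p _ hp,
    fun i => ?_, ?_⟩
  · refine (sum_support_sum_single p _ (fun a (c : ℝ≥0) => (c : ℝ) * a i) (by simp)
      (by intros; push_cast; ring)).trans ?_
    simp [← Finset.mul_sum, ← Nat.cast_sum, hcover i, hm]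
  · refine Eq.trans ?_ (sum_support_sum_single p _ (fun _ (c : ℝ≥0) => (c : ℝ≥0∞)) (by simp)
      (by simp)).symm
    simp [ENNReal.coe_inv (Nat.cast_ne_zero.2 hm), div_eq_mul_inv]

lemma ofReal_sum_le_zC (w : Fin n → ℝ) (hw : ∀ a ∈ P, ∑ i, w i * a i ≤ 1) :
    ENNReal.ofReal (∑ i, w i) ≤ zC n P := by
  refine le_sInf ?_
  rintro _ ⟨x, hxP, hcover, rfl⟩
  rw [← ENNReal.ofNNReal_finsetSum]
  refine ENNReal.ofReal_le_of_le_toReal ?_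
  calc ∑ i, w i = ∑ i, w i * ∑ a ∈ x.support, (x a : ℝ) * a i := by simp [hcover]
    _ = ∑ a ∈ x.support, (x a : ℝ) * ∑ i, w i * a i := by
      simp only [Finset.mul_sum]
      rw [Finset.sum_comm]
      exact Finset.sum_congr rfl fun _ _ => Finset.sum_congr rfl fun _ _ => by ring
    _ ≤ ∑ a ∈ x.support, (x a : ℝ) := Finset.sum_le_sum fun a ha =>
      mul_le_of_le_one_right (x a).coe_nonneg (hw a (hxP a ha))
    _ = _ := by rw [ENNReal.coe_toReal, NNReal.coe_sum]

end PatternBounds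

def FitsInBins {n : ℕ} (k : ℕ) (L : ℝ) (l : Fin n → ℝ) : Prop :=
  ∃ f : Fin n → Fin k, ∀ j, ∑ i with f i = j, l i ≤ L

section Packing

variable {n : ℕ} {L : ℝ} {l : Fin n → ℝ}

lemma sum_le_of_mem_feasiblePatterns (hl : ∀ i, 0 ≤ l i) {p : Fin n → ℕ}
    (hp : p ∈ feasiblePatterns n L l) (s : Finset (Fin n)) (hs : ∀ i ∈ s, p i ≠ 0) :
    ∑ i ∈ s, l i ≤ L :=
  calc ∑ i ∈ s, l i ≤ ∑ i ∈ s, l i * p i := Finset.sum_le_sum fun i hi =>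
        le_mul_of_one_le_right (hl i) (by exact_mod_cast Nat.one_le_iff_ne_zero.2 (hs i hi))
    _ ≤ ∑ i, l i * p i := Finset.sum_le_sum_of_subset_of_nonneg (Finset.subset_univ s)
        fun i _ _ => mul_nonneg (hl i) (Nat.cast_nonneg _)
    _ ≤ L := hp

/-- Each item lies in exactly one pattern of an integral cover; the patterns used are the bins. -/
lemma fitsInBins_of_cover (hl : ∀ i, 0 ≤ l i) (hL : 0 ≤ L) (x : (Fin n → ℕ) →₀ ℕ)
    (hx : ∀ a ∈ x.support, a ∈ feasiblePatterns n L l)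
    (hcover : ∀ i, ∑ a ∈ x.support, x a * a i = 1) {k : ℕ} (hk : ∑ a ∈ x.support, x a ≤ k) :
    FitsInBins k L l := by
  classical
  choose g hg_mem hg_ne using fun i =>
    Finset.exists_ne_zero_of_sum_ne_zero ((hcover i).symm ▸ one_ne_zero)
  have hg : ∀ i, g i i ≠ 0 := fun i => right_ne_zero_of_mul (hg_ne i)
  set T := univ.image g
  have hT : T.card ≤ k := calc
    T.card = ∑ _ ∈ T, 1 := Finset.card_eq_sum_ones T
    _ ≤ ∑ a ∈ T, x a := Finset.sum_le_sum fun a ha => by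
      obtain ⟨i, -, rfl⟩ := Finset.mem_image.1 ha
      exact Nat.one_le_iff_ne_zero.2 (Finsupp.mem_support_iff.1 (hg_mem i))
    _ ≤ ∑ a ∈ x.support, x a := Finset.sum_le_sum_of_subset fun a ha => by
      obtain ⟨i, -, rfl⟩ := Finset.mem_image.1 ha
      exact hg_mem i
    _ ≤ k := hk
  let e : T ↪ Fin k := T.equivFin.toEmbedding.trans (Fin.castLEEmb hT)
  refine ⟨fun i => e ⟨g i, Finset.mem_image_of_mem g (mem_univ i)⟩, fun j => ?_⟩
  by_cases hj : ∃ i₀, e ⟨g i₀, Finset.mem_image_of_mem g (mem_univ i₀)⟩ = j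
  · obtain ⟨i₀, rfl⟩ := hj
    refine sum_le_of_mem_feasiblePatterns hl (hx _ (hg_mem i₀)) _ fun i hi => ?_
    have hgi : g i = g i₀ := congrArg Subtype.val (e.injective (Finset.mem_filter.1 hi).2)
    exact hgi ▸ hg i
  · rw [Finset.sum_eq_zero fun i hi => absurd ⟨i, (Finset.mem_filter.1 hi).2⟩ hj]
    exact hL

lemma le_zDf_of_not_fitsInBins (hl : ∀ i, 0 ≤ l i) (hL : 0 ≤ L) {k : ℕ}
    (h : ¬ FitsInBins k L l) : (k + 1 : ℝ≥0∞) ≤ zDf n L l := by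
  refine le_sInf ?_
  rintro _ ⟨x, hx, hcover, rfl⟩
  rw [← Nat.cast_sum, ← Nat.cast_add_one, Nat.cast_le, Nat.add_one_le_iff]
  by_contra! hk
  exact h (fitsInBins_of_cover hl hL x hx hcover hk)

end Packing

def canPack {k : ℕ} : List ℕ → (Fin k → ℕ) → Bool
  | [], _ => true
  | x :: xs, c => (List.finRange k).any fun j =>
      decide (x ≤ c j) && canPack xs (Function.update c j (c j - x))

lemma canPack_ofFn {k : ℕ} : ∀ {n : ℕ} (l : Fin n → ℕ) (f : Fin n → Fin k) (c : Fin k → ℕ),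
    (∀ j, ∑ i, (if f i = j then l i else 0) ≤ c j) → canPack (List.ofFn l) c = true
  | 0, _, _, _, _ => rfl
  | n + 1, l, f, c, h => by
    rw [List.ofFn_succ, canPack, List.any_eq_true]
    refine ⟨f 0, List.mem_finRange _, ?_⟩
    have h0 := h (f 0)
    rw [Fin.sum_univ_succ, if_pos rfl] at h0
    rw [Bool.and_eq_true, decide_eq_true_eq]
    refine ⟨by omega, canPack_ofFn _ (fun i => f i.succ) _ fun j => ?_⟩
    have hj := h j
    rw [Fin.sum_univ_succ] at hj
    by_cases hj0 : j = f 0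
    · subst hj0
      rw [Function.update_self]
      omega
    · rw [if_neg (Ne.symm hj0)] at hj
      rw [Function.update_of_ne hj0]
      omega

/-- The largest total weight of a sublist of `(length, weight)` pairs of total length at most
`cap`. -/
def knapsack : List (ℕ × ℕ) → ℕ → ℕ
  | [], _ => 0
  | (l, w) :: xs, cap =>
      max (knapsack xs cap) (if l ≤ cap then w + knapsack xs (cap - l) else 0)

lemma sum_mul_le_knapsack : ∀ {n : ℕ} (l w b : Fin n → ℕ), IsBinary b → ∀ cap,
    ∑ i, l i * b i ≤ cap → ∑ i, w i * b i ≤ knapsack (List.ofFn fun i => (l i, w i)) cap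
  | 0, _, _, _, _, _, _ => by simp
  | n + 1, l, w, b, hb, cap, h => by
    rw [List.ofFn_succ, knapsack]
    rw [Fin.sum_univ_succ] at h ⊢
    have ih := fun cap => sum_mul_le_knapsack (fun i => l i.succ) (fun i => w i.succ)
      (fun i => b i.succ) (fun i => hb i.succ) cap
    rcases Nat.le_one_iff_eq_zero_or_eq_one.1 (hb 0) with h0 | h0
    · rw [h0] at h ⊢
      simp only [mul_zero, zero_add] at h ⊢
      exact le_max_of_le_left (ih cap h)
    · rw [h0] at h ⊢
      simp only [mul_one] at h ⊢
      refine le_max_of_le_right ?_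
      rw [if_pos (by omega)]
      exact Nat.add_le_add_left (ih (cap - l 0) (by omega)) _

local notation "ℓ" => (![4, 6, 6, 9, 16, 29, 32, 37, 40, 62] : Fin 10 → ℝ)

def lengthsNat : Fin 10 → ℕ := ![4, 6, 6, 9, 16, 29, 32, 37, 40, 62]

lemma cast_lengthsNat : (fun i => (lengthsNat i : ℝ)) = ℓ := by
  funext i
  fin_cases i <;> simp [lengthsNat]

lemma mem_feasiblePatterns_iff (a : Fin 10 → ℕ) :
    a ∈ feasiblePatterns 10 81 ℓ ↔ ∑ i, lengthsNat i * a i ≤ 81 := by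
  rw [← cast_lengthsNat]
  change ∑ i, (lengthsNat i : ℝ) * (a i : ℝ) ≤ 81 ↔ _
  norm_cast

lemma mem_properPatterns_iff (a : Fin 10 → ℕ) :
    a ∈ properPatterns 10 81 ℓ ↔ IsBinary a ∧ ∑ i, lengthsNat i * a i ≤ 81 := by
  rw [← mem_feasiblePatterns_iff]
  rfl

def integralCover : Fin 4 → Fin 10 → ℕ :=
  ![![0, 0, 0, 0, 1, 0, 0, 0, 0, 1], ![1, 0, 0, 0, 0, 0, 0, 1, 1, 0],
    ![0, 0, 1, 1, 0, 1, 1, 0, 0, 0], ![0, 1, 0, 0, 0, 0, 0, 0, 0, 0]]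

lemma zDf_le_four : zDf 10 81 ℓ ≤ 4 := by
  have h := zD_le_card integralCover (P := feasiblePatterns 10 81 ℓ)
    (fun k => (mem_feasiblePatterns_iff _).2 (by revert k; decide)) (by decide)
  exact h.trans_eq (by simp)

lemma not_fitsInBins_three : ¬ FitsInBins 3 81 ℓ := by
  rintro ⟨f, hf⟩
  have hpack : canPack (List.ofFn lengthsNat) (fun _ : Fin 3 => 81) = true :=
    canPack_ofFn lengthsNat f _ fun j => by
      have hj := hf j
      rw [← cast_lengthsNat, Finset.sum_filter] at hj
      exact_mod_cast hj
  exact absurd hpack (by decide)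

lemma four_le_zDf : 4 ≤ zDf 10 81 ℓ := by
  have h := le_zDf_of_not_fitsInBins (fun i => by fin_cases i <;> norm_num) (by norm_num)
    not_fitsInBins_three
  norm_num at h
  exact h

/-- The pattern `{16, 62}` occurs twice: it carries weight `2/3` in the fractional cover. -/
def fractionalCover : Fin 9 → Fin 10 → ℕ :=
  ![![0, 1, 0, 1, 0, 1, 0, 1, 0, 0], ![1, 0, 1, 1, 0, 0, 0, 0, 0, 1],
    ![0, 0, 0, 0, 1, 0, 0, 0, 0, 1], ![0, 0, 0, 0, 1, 0, 0, 0, 0, 1],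
    ![0, 1, 1, 0, 0, 0, 1, 1, 0, 0], ![0, 1, 1, 0, 0, 1, 0, 0, 1, 0],
    ![1, 0, 0, 0, 0, 0, 0, 1, 1, 0], ![0, 0, 0, 1, 0, 0, 1, 0, 1, 0],
    ![1, 0, 0, 0, 1, 1, 1, 0, 0, 0]]

lemma zCp_le_three : zCp 10 81 ℓ ≤ 3 := by
  have h := zC_le_card_div fractionalCover (P := properPatterns 10 81 ℓ)
    (fun k => (mem_properPatterns_iff _).2 (by revert k; unfold IsBinary; decide))
    3 three_ne_zero (by decide)
  refine h.trans_eq ?_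
  rw [Fintype.card_fin, eq_comm, ENNReal.eq_div_iff (by norm_num) (by norm_num)]
  norm_num

def dualWeights : Fin 10 → ℕ := ![0, 0, 0, 0, 0, 1, 1, 1, 1, 2]

lemma three_le_zCp : 3 ≤ zCp 10 81 ℓ := by
  have h := ofReal_sum_le_zC (fun i => (dualWeights i : ℝ) / 2) fun a ha => by
    obtain ⟨hbin, hlen⟩ := (mem_properPatterns_iff a).1 ha
    have hw := sum_mul_le_knapsack lengthsNat dualWeights a hbin 81 hlen
    rw [show knapsack (List.ofFn fun i => (lengthsNat i, dualWeights i)) 81 = 2 by decide] at hw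
    simp only [div_mul_eq_mul_div, ← Finset.sum_div]
    rw [div_le_one two_pos]
    exact_mod_cast hw
  norm_num [dualWeights, Fin.sum_univ_succ] at h
  exact h

/-- the instance `E = (10, 81, (4,6,6,9,16,29,32,37,40,62))`
satisfies `Δ_p(E) = 1`; in particular it is a proper non-IRUP instance. -/
theorem stmt_16 :
    properGap 10 81 ![4, 6, 6, 9, 16, 29, 32, 37, 40, 62] = 1 ∧
    1 ≤ properGap 10 81 ![4, 6, 6, 9, 16, 29, 32, 37, 40, 62] := by
  have hD : zDf 10 81 ℓ = 4 := le_antisymm zDf_le_four four_le_zDf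
  have hC : zCp 10 81 ℓ = 3 := le_antisymm zCp_le_three three_le_zCp
  have h : properGap 10 81 ℓ = 1 := by
    rw [properGap, hD, hC]
    exact ENNReal.sub_eq_of_eq_add (by norm_num) (by norm_num)
  exact ⟨h, h.ge⟩
end
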